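/- Let w' be a valuation of K(X) and let w = [W; φ, γ] be a limit augmentation of an essential continuous family W = (ρ_i = [w'; χ_i, γ_i])_{i∈A} of augmentations of w'. Then φ is an abstract key polynomial for w, and δ(χ_i) < δ(φ) for all i ∈ A. -/

import Mathlib

/-!
Let `τ = δ(φ)` and suppose some nonzero `f` with `deg f < deg φ` has `δ(f) ≥ τ`; take `f` of
minimal degree and let `g` be its monic scalar multiple. Then `g` has a root `β` with
`w̄(X - β) ≥ τ`, while every root `θ` of a polynomial of degree `< deg g` has `w̄(X - θ) < τ`.
Compare `w̄` with the Gauss valuation of weight `τ` centred at `β`: it is `≤ w̄` everywhere, it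
agrees with `w̄` on `φ`, and it gives `g` a positive leading index while the coefficients of the
`g`-expansion of `φ` keep leading index `0`; so that expansion cannot cancel, and
`w(φ) ≤ w_g(φ)`. But `g` and those coefficients are `W`-stable, so `w_g(φ)` is eventually equal
to `(ρ_i)_g(φ) ≤ ρ_i(φ) < γ = w(φ)`.
-/

namespace MLV

open Polynomial

/-- An additive valuation on a commutative ring `R` with values in `Γ ∪ {∞}`
(written additively, with the `min` convention), thought of as the restriction
to `R` of a valuation on its fraction field. -/
structure ValOn (R : Type*) [CommRing R] (Γ : Type*) [AddCommGroup Γ] [LinearOrder Γ] [IsOrderedAddMonoid Γ] where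
  toFun : R → WithTop Γ
  map_zero' : toFun 0 = ⊤
  ne_top' : ∀ f : R, f ≠ 0 → toFun f ≠ ⊤
  map_mul' : ∀ f g : R, toFun (f * g) = toFun f + toFun g
  add_min' : ∀ f g : R, min (toFun f) (toFun g) ≤ toFun (f + g)

variable {K : Type*} [Field K] {Γ : Type*} [AddCommGroup Γ] [LinearOrder Γ] [IsOrderedAddMonoid Γ]

/-- `w` (a valuation on `K(X)`, restricted to `K[X]`) extends the valuation `v` of `K`. -/
def Extends (w : ValOn (Polynomial K) Γ) (v : ValOn K Γ) : Prop :=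
  ∀ c : K, w.toFun (C c) = v.toFun c

/-- `wbar` (a valuation on `K̄(X)`) is a common extension of `w` and of `vbar`. -/
def IsCommonExt {L : Type*} [Field L] [Algebra K L]
    (wbar : ValOn (Polynomial L) Γ) (w : ValOn (Polynomial K) Γ) (vbar : ValOn L Γ) : Prop :=
  (∀ f : Polynomial K, wbar.toFun (f.map (algebraMap K L)) = w.toFun f) ∧
  (∀ c : L, wbar.toFun (C c) = vbar.toFun c)

/-- `δ(f) = max { w̄(X - α) : α ∈ K̄, f(α) = 0 }` (as an element of `WithBot (WithTop Γ)`,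
the value `⊥` corresponding to a polynomial without roots). -/
noncomputable def delta {L : Type*} [Field L] [Algebra K L]
    (wbar : ValOn (Polynomial L) Γ) (f : Polynomial K) : WithBot (WithTop Γ) :=
  (((f.map (algebraMap K L)).roots).map
    fun α => ((wbar.toFun (X - C α) : WithTop Γ) : WithBot (WithTop Γ))).sup

/-- `Q` is an abstract key polynomial for `w` (with respect to the common extension `wbar`
computing `δ`): `Q` is monic and `δ(f) < δ(Q)` for every nonzero `f` with `deg f < deg Q`. -/
def IsABKP {L : Type*} [Field L] [Algebra K L]
    (wbar : ValOn (Polynomial L) Γ) (Q : Polynomial K) : Prop :=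
  Q.Monic ∧ ∀ f : Polynomial K, f ≠ 0 → f.degree < Q.degree → delta wbar f < delta wbar Q

/-- The `Q`-truncation `w_Q` of `w`: on the `Q`-expansion `f = ∑ fᵢ Qⁱ` it equals
`min_i w(fᵢ Qⁱ)`. -/
noncomputable def truncVal (w : ValOn (Polynomial K) Γ) (Q f : Polynomial K) : WithTop Γ :=
  (Finset.range (f.natDegree + 1)).inf fun i => w.toFun ((f /ₘ Q ^ i) %ₘ Q * Q ^ i)

/-- `f ∼_u g` : `u(f - g) > u f = u g`. -/
def EquivMod (u : Polynomial K → WithTop Γ) (f g : Polynomial K) : Prop :=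
  u f < u (f - g) ∧ u f = u g

/-- `f ∣_u g` : `g ∼_u f h` for some `h`. -/
def DvdMod (u : Polynomial K → WithTop Γ) (f g : Polynomial K) : Prop :=
  ∃ h : Polynomial K, EquivMod u g (f * h)

/-- A key polynomial for `u`: monic, `u`-irreducible and `u`-minimal. -/
def IsKeyPol (u : Polynomial K → WithTop Γ) (φ : Polynomial K) : Prop :=
  φ.Monic ∧
  (∀ h q : Polynomial K, DvdMod u φ (h * q) → DvdMod u φ h ∨ DvdMod u φ q) ∧
  (∀ h : Polynomial K, h ≠ 0 → DvdMod u φ h → φ.degree ≤ h.degree)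

/-- A key polynomial for `u` of minimal degree (i.e. of degree `deg(u)`). -/
def IsMinKeyPol (u : Polynomial K → WithTop Γ) (φ : Polynomial K) : Prop :=
  IsKeyPol u φ ∧ ∀ ψ : Polynomial K, IsKeyPol u ψ → φ.degree ≤ ψ.degree

/-- `u ≤ u'` pointwise on `K[X]`. -/
def FnLe (u u' : Polynomial K → WithTop Γ) : Prop :=
  ∀ f : Polynomial K, u f ≤ u' f

/-- `u < u'` : `u ≤ u'` and `u f < u' f` for some `f`. -/
def FnLt (u u' : Polynomial K → WithTop Γ) : Prop :=
  FnLe u u' ∧ ∃ f : Polynomial K, u f < u' f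

/-- `g ∈ Φ(u, u')` : `g` is monic of minimal degree with `u g < u' g`. -/
def InPhi (u u' : Polynomial K → WithTop Γ) (g : Polynomial K) : Prop :=
  g.Monic ∧ u g < u' g ∧
  ∀ h : Polynomial K, h.Monic → u h < u' h → g.degree ≤ h.degree

/-- The value at `f` of the augmented valuation `[u; φ, γ]`, computed via the
`φ`-expansion `f = ∑ fᵢ φⁱ` as `min_i (u fᵢ + i γ)`. -/
noncomputable def augVal (u : Polynomial K → WithTop Γ) (φ : Polynomial K) (γ : Γ)
    (f : Polynomial K) : WithTop Γ :=
  (Finset.range (f.natDegree + 1)).inf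
    fun i => u ((f /ₘ φ ^ i) %ₘ φ) + i • ((γ : WithTop Γ))

/-- `u' = [u; φ, γ]` is the ordinary augmentation of `u` at the key polynomial `φ`
with value `γ > u φ`. -/
def IsOrdAug (u : Polynomial K → WithTop Γ) (φ : Polynomial K) (γ : Γ)
    (u' : Polynomial K → WithTop Γ) : Prop :=
  IsKeyPol u φ ∧ u φ < (γ : WithTop Γ) ∧ ∀ f : Polynomial K, u' f = augVal u φ γ f

/-- A continuous family of augmentations `(ρ_i = [w'; χ_i, γ_i])_{i ∈ ι}` of `w'`. -/
structure ContFamily (w' : ValOn (Polynomial K) Γ) (ι : Type*) [LinearOrder ι] where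
  chi : ι → Polynomial K
  gam : ι → Γ
  rho : ι → ValOn (Polynomial K) Γ
  no_last : ∀ i : ι, ∃ j : ι, i < j
  gam_mono : StrictMono gam
  aug : ∀ i : ι, IsOrdAug w'.toFun (chi i) (gam i) (rho i).toFun
  deg_eq : ∀ i j : ι, (chi i).degree = (chi j).degree
  key_step : ∀ i j : ι, i < j → IsKeyPol (rho i).toFun (chi j)
  not_equiv : ∀ i j : ι, i < j → ¬ EquivMod (rho i).toFun (chi j) (chi i)
  step : ∀ i j : ι, i < j → IsOrdAug (rho i).toFun (chi j) (gam j) (rho j).toFun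

/-- `f` is `W`-stable with stable value `c`. -/
def StableAt {w' : ValOn (Polynomial K) Γ} {ι : Type*} [LinearOrder ι]
    (F : ContFamily w' ι) (f : Polynomial K) (c : WithTop Γ) : Prop :=
  ∃ i0 : ι, ∀ i : ι, i0 ≤ i → (F.rho i).toFun f = c

/-- `f` is `W`-stable. -/
def IsStable {w' : ValOn (Polynomial K) Γ} {ι : Type*} [LinearOrder ι]
    (F : ContFamily w' ι) (f : Polynomial K) : Prop :=
  ∃ c : WithTop Γ, StableAt F f c

/-- The valuation `w` is the stable limit of the family `F`. -/
def IsStableLimit {w' : ValOn (Polynomial K) Γ} {ι : Type*} [LinearOrder ι]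
    (F : ContFamily w' ι) (w : ValOn (Polynomial K) Γ) : Prop :=
  ∀ f : Polynomial K, StableAt F f (w.toFun f)

/-- `Q` is a MacLane–Vaquié limit key polynomial for `F`: monic, `F`-unstable,
of minimal degree among unstable polynomials. -/
def IsLimitKP {w' : ValOn (Polynomial K) Γ} {ι : Type*} [LinearOrder ι]
    (F : ContFamily w' ι) (Q : Polynomial K) : Prop :=
  Q.Monic ∧ ¬ IsStable F Q ∧ ∀ g : Polynomial K, ¬ IsStable F g → Q.degree ≤ g.degree

/-- The continuous family `F` is essential: `deg(W) < m_∞ < ∞`. -/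
def IsEssential {w' : ValOn (Polynomial K) Γ} {ι : Type*} [LinearOrder ι]
    (F : ContFamily w' ι) : Prop :=
  (∃ f : Polynomial K, ¬ IsStable F f) ∧
  ∀ (i : ι) (f : Polynomial K), ¬ IsStable F f → (F.chi i).degree < f.degree

/-- `w = [F; Q, γ]` is the limit augmentation of the family `F` at the limit key
polynomial `Q` with value `γ`: on `Q`-expansions, `w f = min_i (ρ_W(fᵢ) + iγ)`, which
since the coefficients are stable is the eventual value of `[ρ_i; Q, γ]` on `f`. -/
def IsLimitAug {w' : ValOn (Polynomial K) Γ} {ι : Type*} [LinearOrder ι]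
    (F : ContFamily w' ι) (Q : Polynomial K) (γ : Γ)
    (w : ValOn (Polynomial K) Γ) : Prop :=
  IsLimitKP F Q ∧ (∀ i : ι, (F.rho i).toFun Q < (γ : WithTop Γ)) ∧
  ∀ f : Polynomial K, ∃ i0 : ι, ∀ i : ι, i0 ≤ i → w.toFun f = augVal (F.rho i).toFun Q γ f

/-- `w` is a depth-zero valuation `w_{α,δ}` over `v`. -/
def IsDepthZero (v : ValOn K Γ) (w : ValOn (Polynomial K) Γ) : Prop :=
  ∃ (α : K) (d : Γ), ∀ f : Polynomial K,
    w.toFun f = (Finset.range (f.natDegree + 1)).inf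
      fun i => v.toFun (((Polynomial.taylor α) f).coeff i) + i • ((d : WithTop Γ))

/-- An ordinary augmentation step of a MacLane–Vaquié chain:
`u' = [u; φ, γ]` with `deg(u) < deg Φ(u, u')`. -/
def OrdMLVStep (u u' : Polynomial K → WithTop Γ) (φ : Polynomial K) (γ : Γ) : Prop :=
  IsOrdAug u φ γ u' ∧
  ∀ ψ g : Polynomial K, IsMinKeyPol u ψ → InPhi u u' g → ψ.degree < g.degree

/-- A limit augmentation step of a MacLane–Vaquié chain, with the underlying essential
continuous family `F` made explicit: `w = [F; φ, γ]`, `deg(w') = deg Φ(w', w)` and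
`φprev ∉ Φ(w', w)`. -/
def LimMLVStepWith {w' : ValOn (Polynomial K) Γ} {ι : Type*} [LinearOrder ι]
    (F : ContFamily w' ι) (w : ValOn (Polynomial K) Γ)
    (φprev φ : Polynomial K) (γ : Γ) : Prop :=
  IsEssential F ∧ IsLimitAug F φ γ w ∧
  (∀ ψ g : Polynomial K, IsMinKeyPol w'.toFun ψ → InPhi w'.toFun w.toFun g →
    ψ.degree = g.degree) ∧
  ¬ InPhi w'.toFun w.toFun φprev

/-- A limit augmentation step of a MacLane–Vaquié chain (the underlying essential
continuous family being existentially quantified). -/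
def LimMLVStep (w' w : ValOn (Polynomial K) Γ) (φprev φ : Polynomial K) (γ : Γ) : Prop :=
  ∃ (ι : Type) (li : LinearOrder ι) (F : @ContFamily K _ Γ _ _ _ w' ι li),
    @LimMLVStepWith K _ Γ _ _ _ w' ι li F w φprev φ γ

/-- Membership in the index set `I`: `I = ℕ` if `o = none`, and `I = {0, …, N}`
if `o = some N`. -/
def InIdx (o : Option ℕ) (j : ℕ) : Prop :=
  ∀ N : ℕ, o = some N → j ≤ N

/-- An induced complete sequence `{Q_i}_{i ∈ Δ}` of abstract key polynomials for `w`: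
a complete sequence of ABKPs, organized in blocks `Δ_j = {j} ∪ ϑ_j` (for `j` in
`I = {0,…,N}` or `I = ℕ`), satisfying the properties of Remark 1.3.  Here `blk i`
is the block of an index `i ∈ Δ`, `main j ∈ Δ` is the distinguished first element
of the block `Δ_j`, and `ϑ_j = {i ∈ Δ | blk i = j, i ≠ main j}`. -/
structure ICS {L : Type*} [Field L] [Algebra K L]
    (wbar : ValOn (Polynomial L) Γ) (w : ValOn (Polynomial K) Γ)
    (Δ : Type*) [LinearOrder Δ] where
  Q : Δ → Polynomial K
  abkp : ∀ i : Δ, IsABKP wbar (Q i)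
  wf : WellFoundedLT Δ
  delta_mono : ∀ i i' : Δ, i < i' → delta wbar (Q i) < delta wbar (Q i')
  wval_mono : ∀ i i' : Δ, i < i' → w.toFun (Q i) < w.toFun (Q i')
  complete : ∀ f : Polynomial K, f ≠ 0 →
    ∃ i : Δ, (Q i).degree ≤ f.degree ∧ truncVal w (Q i) f = w.toFun f
  Ifin : Option ℕ
  blk : Δ → ℕ
  main : ℕ → Δ
  blk_mono : ∀ i i' : Δ, i ≤ i' → blk i ≤ blk i'
  blk_mem : ∀ i : Δ, InIdx Ifin (blk i)
  blk_main : ∀ j : ℕ, InIdx Ifin j → blk (main j) = j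
  main_min : ∀ (j : ℕ) (i : Δ), blk i = j → main j ≤ i
  theta_no_last : ∀ i : Δ, i ≠ main (blk i) →
    ∃ i' : Δ, blk i' = blk i ∧ i' ≠ main (blk i) ∧ i < i'
  deg_blk_eq : ∀ i i' : Δ, blk i = blk i' → (Q i).degree = (Q i').degree
  deg_blk_lt : ∀ i i' : Δ, blk i < blk i' → (Q i).degree < (Q i').degree
  degQ0 : (Q (main 0)).degree = 1

namespace ValOn

variable {R : Type*} [CommRing R] [Nontrivial R]

theorem toFun_one (u : ValOn R Γ) : u.toFun 1 = 0 := by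
  have h := u.map_mul' 1 1
  rw [mul_one] at h
  lift u.toFun 1 to Γ using u.ne_top' 1 one_ne_zero with a
  exact_mod_cast add_eq_left.mp (WithTop.coe_injective h.symm)

def toAddValuation (u : ValOn R Γ) : AddValuation R (WithTop Γ) :=
  AddValuation.of u.toFun u.map_zero' u.toFun_one u.add_min' u.map_mul'

@[simp]
theorem toAddValuation_apply (u : ValOn R Γ) (f : R) : u.toAddValuation f = u.toFun f := rfl

end ValOn

section AddValuation

variable {R : Type*} [Ring R] {Γ₀ : Type*} [LinearOrderedAddCommMonoidWithTop Γ₀]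
  (v : AddValuation R Γ₀) {ι : Type*} {s : Finset ι} {f : ι → R}

theorem _root_.AddValuation.map_sum_eq_of_lt [DecidableEq ι] {j : ι} (hj : j ∈ s)
    (hf : ∀ i ∈ s, i ≠ j → v (f j) < v (f i)) : v (∑ i ∈ s, f i) = v (f j) := by
  have := (AddValuation.toValuation v).map_sum_eq_of_lt hj fun i hi => by
    rw [Finset.mem_sdiff, Finset.mem_singleton] at hi
    simpa using hf i hi.1 hi.2
  simpa using this

theorem _root_.AddValuation.le_map_sum_add {c t : Γ₀} (h : ∀ i ∈ s, c ≤ v (f i) + t) :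
    c ≤ v (∑ i ∈ s, f i) + t := by
  classical
  induction s using Finset.induction_on with
  | empty => simp
  | insert a s ha ih =>
    rw [Finset.sum_insert ha]
    calc c ≤ min (v (f a) + t) (v (∑ i ∈ s, f i) + t) :=
          le_min (h a (s.mem_insert_self a)) (ih fun i hi => h i (Finset.mem_insert_of_mem hi))
      _ = min (v (f a)) (v (∑ i ∈ s, f i)) + t := min_add_add_right _ _ _
      _ ≤ _ := add_le_add_left (v.map_add _ _) t

theorem _root_.AddValuation.lt_map_sum_add {c t : Γ₀} (hc : c ≠ ⊤)
    (h : ∀ i ∈ s, c < v (f i) + t) : c < v (∑ i ∈ s, f i) + t := by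
  classical
  induction s using Finset.induction_on with
  | empty => simpa using hc.lt_top
  | insert a s ha ih =>
    rw [Finset.sum_insert ha]
    calc c < min (v (f a) + t) (v (∑ i ∈ s, f i) + t) :=
          lt_min (h a (s.mem_insert_self a)) (ih fun i hi => h i (Finset.mem_insert_of_mem hi))
      _ = min (v (f a)) (v (∑ i ∈ s, f i)) + t := min_add_add_right _ _ _
      _ ≤ _ := add_le_add_left (v.map_add _ _) t

end AddValuation

theorem _root_.AddValuation.le_of_forall_mem_roots {L : Type*} [Field L] [IsAlgClosed L]
    {Γ₀ : Type*} [LinearOrderedAddCommMonoidWithTop Γ₀] (ν₁ ν₂ : AddValuation L[X] Γ₀)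
    (hC : ∀ c, ν₁ (C c) ≤ ν₂ (C c)) {P : L[X]}
    (hP : ∀ θ ∈ P.roots, ν₁ (X - C θ) ≤ ν₂ (X - C θ)) : ν₁ P ≤ ν₂ P := by
  rw [(IsAlgClosed.splits P).eq_prod_roots, AddValuation.map_mul, AddValuation.map_mul]
  refine add_le_add (hC _) ?_
  generalize P.roots = m at hP ⊢
  induction m using Multiset.induction_on with
  | empty => simp
  | cons θ m ih =>
    rw [Multiset.map_cons, Multiset.prod_cons, AddValuation.map_mul, AddValuation.map_mul]
    exact add_le_add (hP θ (Multiset.mem_cons_self θ m))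
      (ih fun θ' hθ' => hP θ' (Multiset.mem_cons_of_mem hθ'))

section Gauss

variable {R : Type*} [Field R] (v : AddValuation R (WithTop Γ)) (τ : Γ)

noncomputable def gaussFun (P : R[X]) : WithTop Γ :=
  P.support.inf fun j => v (P.coeff j) + j • (τ : WithTop Γ)

theorem gaussFun_le (P : R[X]) (j : ℕ) :
    gaussFun v τ P ≤ v (P.coeff j) + j • (τ : WithTop Γ) := by
  by_cases hj : j ∈ P.support
  · exact Finset.inf_le (f := fun j => v (P.coeff j) + j • (τ : WithTop Γ)) hj
  · rw [notMem_support_iff.mp hj, AddValuation.map_zero, top_add]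
    exact le_top

theorem le_gaussFun {P : R[X]} {c : WithTop Γ}
    (h : ∀ j, c ≤ v (P.coeff j) + j • (τ : WithTop Γ)) : c ≤ gaussFun v τ P :=
  Finset.le_inf fun j _ => h j

theorem gaussFun_ne_top {P : R[X]} (hP : P ≠ 0) : gaussFun v τ P ≠ ⊤ := by
  refine ne_top_of_le_ne_top ?_ (gaussFun_le v τ P P.natDegree)
  rw [← WithTop.coe_nsmul]
  exact WithTop.add_ne_top.mpr
    ⟨v.ne_top_iff.mpr (leadingCoeff_ne_zero.mpr hP), WithTop.coe_ne_top⟩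

def IsGaussLead (P : R[X]) (a : ℕ) : Prop :=
  v (P.coeff a) + a • (τ : WithTop Γ) = gaussFun v τ P ∧
    ∀ j < a, gaussFun v τ P < v (P.coeff j) + j • (τ : WithTop Γ)

theorem exists_isGaussLead (P : R[X]) : ∃ a, IsGaussLead v τ P a := by
  classical
  have hex : ∃ j, v (P.coeff j) + j • (τ : WithTop Γ) = gaussFun v τ P := by
    by_cases hP : P = 0
    · exact ⟨0, by simp [hP, gaussFun]⟩
    · obtain ⟨j, -, hj⟩ := Finset.exists_mem_eq_inf P.support (nonempty_support_iff.mpr hP)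
        fun j => v (P.coeff j) + j • (τ : WithTop Γ)
      exact ⟨j, hj.symm⟩
  exact ⟨Nat.find hex, Nat.find_spec hex, fun j hj =>
    (gaussFun_le v τ P j).lt_of_ne fun h => Nat.find_min hex hj h.symm⟩

variable {v τ}

theorem gaussFun_one : gaussFun v τ (1 : R[X]) = 0 :=
  le_antisymm (by simpa using gaussFun_le v τ 1 0) (le_gaussFun v τ fun j => by
    rcases j with _ | j <;> simp [coeff_one])

theorem gaussFun_C (c : R) : gaussFun v τ (C c) = v c :=
  le_antisymm (by simpa using gaussFun_le v τ (C c) 0) (le_gaussFun v τ fun j => by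
    rcases j with _ | j <;> simp [coeff_C])

theorem gaussFun_X_add_C (c : R) : gaussFun v τ (X + C c) = min (v c) τ := by
  have h0 := gaussFun_le v τ (X + C c) 0
  have h1 := gaussFun_le v τ (X + C c) 1
  rw [coeff_add] at h0 h1
  simp only [coeff_X_zero, coeff_C_zero, zero_add, zero_nsmul, add_zero, coeff_X_one,
    coeff_C_succ, AddValuation.map_one, one_nsmul] at h0 h1
  refine le_antisymm (le_min h0 h1) (le_gaussFun v τ fun j => ?_)
  rcases j with _ | _ | j
  · simp
  · simp
  · simp [coeff_X]

theorem isGaussLead_zero_iff {P : R[X]} :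
    IsGaussLead v τ P 0 ↔ v (P.coeff 0) = gaussFun v τ P := by
  simp [IsGaussLead]

theorem IsGaussLead.pos_of_coeff_zero {P : R[X]} {a : ℕ} (ha : IsGaussLead v τ P a)
    (hP : P ≠ 0) (h0 : P.coeff 0 = 0) : 0 < a := by
  refine Nat.pos_of_ne_zero fun ha0 => gaussFun_ne_top v τ hP ?_
  rw [← ha.1, ha0, h0, AddValuation.map_zero, top_add]

section Mul

variable {A B : R[X]} {a b : ℕ}

theorem gaussFun_add_le_term (i k : ℕ) : gaussFun v τ A + gaussFun v τ B
    ≤ v (A.coeff i * B.coeff k) + (i + k) • (τ : WithTop Γ) := by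
  rw [AddValuation.map_mul, add_nsmul, add_add_add_comm]
  exact add_le_add (gaussFun_le v τ A i) (gaussFun_le v τ B k)

theorem IsGaussLead.add_lt_term (ha : IsGaussLead v τ A a) (hb : IsGaussLead v τ B b)
    (hA : A ≠ 0) (hB : B ≠ 0) {i k : ℕ} (h : i < a ∨ k < b) : gaussFun v τ A + gaussFun v τ B
    < v (A.coeff i * B.coeff k) + (i + k) • (τ : WithTop Γ) := by
  rw [AddValuation.map_mul, add_nsmul, add_add_add_comm]
  rcases h with hi | hk
  · exact WithTop.add_lt_add_of_lt_of_le (gaussFun_ne_top v τ hB) (ha.2 i hi)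
      (gaussFun_le v τ B k)
  · exact WithTop.add_lt_add_of_le_of_lt (gaussFun_ne_top v τ hA) (gaussFun_le v τ A i)
      (hb.2 k hk)

theorem IsGaussLead.mul (ha : IsGaussLead v τ A a) (hb : IsGaussLead v τ B b) (hA : A ≠ 0)
    (hB : B ≠ 0) : gaussFun v τ (A * B) = gaussFun v τ A + gaussFun v τ B ∧
      IsGaussLead v τ (A * B) (a + b) := by
  classical
  have hlt : ∀ j < a + b, gaussFun v τ A + gaussFun v τ B
      < v ((A * B).coeff j) + j • (τ : WithTop Γ) := fun j hj => by
    rw [coeff_mul]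
    refine v.lt_map_sum_add (WithTop.add_ne_top.mpr
      ⟨gaussFun_ne_top v τ hA, gaussFun_ne_top v τ hB⟩) fun x hx => ?_
    have hx' := Finset.HasAntidiagonal.mem_antidiagonal.mp hx
    rw [← hx']
    exact ha.add_lt_term hb hA hB (by omega)
  have hab : v (A.coeff a * B.coeff b) + (a + b) • (τ : WithTop Γ)
      = gaussFun v τ A + gaussFun v τ B := by
    rw [AddValuation.map_mul, add_nsmul, add_add_add_comm, ha.1, hb.1]
  have hat : v ((A * B).coeff (a + b)) + (a + b) • (τ : WithTop Γ)
      = gaussFun v τ A + gaussFun v τ B := by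
    rw [← hab, coeff_mul]
    congr 1
    refine v.map_sum_eq_of_lt (j := (a, b)) (Finset.HasAntidiagonal.mem_antidiagonal.mpr rfl)
      fun x hx hne => ?_
    have hx' := Finset.HasAntidiagonal.mem_antidiagonal.mp hx
    have hlt := ha.add_lt_term hb hA hB (i := x.1) (k := x.2) (by
      by_contra! h
      exact hne (Prod.ext (by omega) (by omega)))
    rw [hx', ← hab] at hlt
    exact (WithTop.add_lt_add_iff_right (WithTop.coe_nsmul τ _ ▸ WithTop.coe_ne_top)).mp hlt
  have hval : gaussFun v τ (A * B) = gaussFun v τ A + gaussFun v τ B :=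
    le_antisymm (hat ▸ gaussFun_le v τ _ _) (le_gaussFun v τ fun j => by
      rw [coeff_mul]
      refine v.le_map_sum_add fun x hx => ?_
      rw [← Finset.HasAntidiagonal.mem_antidiagonal.mp hx]
      exact gaussFun_add_le_term x.1 x.2)
  exact ⟨hval, hval ▸ hat, fun j hj => hval ▸ hlt j hj⟩

end Mul

variable (v τ) in
noncomputable def gaussVal : AddValuation R[X] (WithTop Γ) :=
  AddValuation.of (gaussFun v τ) (by simp [gaussFun]) gaussFun_one
    (fun A B => le_gaussFun v τ fun j => by
      calc min (gaussFun v τ A) (gaussFun v τ B)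
          ≤ min (v (A.coeff j) + j • (τ : WithTop Γ)) (v (B.coeff j) + j • (τ : WithTop Γ)) :=
            min_le_min (gaussFun_le v τ A j) (gaussFun_le v τ B j)
        _ ≤ v ((A + B).coeff j) + j • (τ : WithTop Γ) := by
            rw [min_add_add_right, coeff_add]
            exact add_le_add_left (v.map_add _ _) _)
    (fun A B => by
      by_cases hA : A = 0
      · simp [hA, gaussFun]
      by_cases hB : B = 0
      · simp [hB, gaussFun]
      obtain ⟨a, ha⟩ := exists_isGaussLead v τ A
      obtain ⟨b, hb⟩ := exists_isGaussLead v τ B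
      exact (ha.mul hb hA hB).1)

theorem gaussVal_apply (P : R[X]) : gaussVal v τ P = gaussFun v τ P := rfl

theorem IsGaussLead.pow {A : R[X]} {a : ℕ} (ha : IsGaussLead v τ A a) (hA : A ≠ 0) (k : ℕ) :
    IsGaussLead v τ (A ^ k) (k * a) := by
  induction k with
  | zero => simp [isGaussLead_zero_iff, gaussFun_one]
  | succ k ih =>
    rw [pow_succ, Nat.succ_mul]
    exact (ih.mul ha (pow_ne_zero k hA) hA).2

/-- The sum attains its value at the coefficient whose index is the least leading index among the
terms of minimal value. -/
theorem gaussVal_sum {ι : Type*} [DecidableEq ι] (S : Finset ι) (H : ι → R[X]) (lead : ι → ℕ)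
    (hinj : Set.InjOn lead S) (hlead : ∀ k ∈ S, H k ≠ 0 → IsGaussLead v τ (H k) (lead k)) :
    gaussVal v τ (∑ k ∈ S, H k) = S.inf fun k => gaussVal v τ (H k) := by
  set c := S.inf fun k => gaussVal v τ (H k)
  refine le_antisymm ?_ ((gaussVal v τ).map_le_sum fun k hk => Finset.inf_le hk)
  by_cases hc : c = ⊤
  · exact hc ▸ le_top
  have hS : S.Nonempty := Finset.nonempty_iff_ne_empty.mpr fun h => hc (by simp [c, h])
  obtain ⟨k₁, hk₁, hk₁c⟩ := Finset.exists_mem_eq_inf S hS fun k => gaussVal v τ (H k)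
  obtain ⟨k₀, hk₀, hmin⟩ := (S.filter fun k => gaussVal v τ (H k) = c).exists_min_image lead
    ⟨k₁, Finset.mem_filter.mpr ⟨hk₁, hk₁c.symm⟩⟩
  obtain ⟨hk₀S, hk₀c⟩ := Finset.mem_filter.mp hk₀
  have hne : ∀ k, gaussVal v τ (H k) = c → H k ≠ 0 := fun k hk h0 => hc (by simp [← hk, h0])
  have ha := hlead k₀ hk₀S (hne k₀ hk₀c)
  have hτ : lead k₀ • (τ : WithTop Γ) ≠ ⊤ := WithTop.coe_nsmul τ _ ▸ WithTop.coe_ne_top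
  have hothers : ∀ k ∈ S, k ≠ k₀ →
      v ((H k₀).coeff (lead k₀)) < v ((H k).coeff (lead k₀)) := fun k hk hkk₀ => by
    rw [← WithTop.add_lt_add_iff_right hτ, ha.1, ← gaussVal_apply, hk₀c]
    by_cases hkc : gaussVal v τ (H k) = c
    · have hlt : lead k₀ < lead k := (hmin k (Finset.mem_filter.mpr ⟨hk, hkc⟩)).lt_of_ne
        fun h => hkk₀ (hinj hk hk₀S h.symm)
      exact hkc ▸ (hlead k hk (hne k hkc)).2 _ hlt
    · exact ((Finset.inf_le hk).lt_of_ne (Ne.symm hkc)).trans_le (gaussFun_le v τ _ _)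
  calc gaussVal v τ (∑ k ∈ S, H k)
      ≤ v ((∑ k ∈ S, H k).coeff (lead k₀)) + lead k₀ • (τ : WithTop Γ) := gaussFun_le v τ _ _
    _ = v ((H k₀).coeff (lead k₀)) + lead k₀ • (τ : WithTop Γ) := by
        rw [finsetSum_coeff, v.map_sum_eq_of_lt hk₀S hothers]
    _ = c := ha.1.trans hk₀c

variable (v τ) in
noncomputable def gaussValAt (β : R) : AddValuation R[X] (WithTop Γ) :=
  (gaussVal v τ).comap (taylorAlgHom β).toRingHom

theorem gaussValAt_apply (β : R) (P : R[X]) :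
    gaussValAt v τ β P = gaussVal v τ (taylor β P) :=
  rfl

theorem gaussValAt_C (β c : R) : gaussValAt v τ β (C c) = v c := by
  rw [gaussValAt_apply, taylor_C]
  exact gaussFun_C c

theorem gaussValAt_X_sub_C (β θ : R) : gaussValAt v τ β (X - C θ) = min (v (β - θ)) τ := by
  rw [gaussValAt_apply, map_sub, taylor_X, taylor_C, add_sub_assoc, ← C_sub]
  exact gaussFun_X_add_C _

end Gauss

section Comparison

variable {L : Type*} [Field L] [IsAlgClosed L] {ν : AddValuation L[X] (WithTop Γ)}
  {v : AddValuation L (WithTop Γ)} {τ : Γ} {β : L}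

theorem gaussValAt_le (hC : ∀ c, ν (C c) = v c) (hβ : (τ : WithTop Γ) ≤ ν (X - C β))
    (P : L[X]) : gaussValAt v τ β P ≤ ν P :=
  AddValuation.le_of_forall_mem_roots _ _ (fun c => by rw [gaussValAt_C, hC]) fun θ _ => by
    rw [gaussValAt_X_sub_C, ← hC, min_comm]
    calc min (τ : WithTop Γ) (ν (C (β - θ))) ≤ min (ν (X - C β)) (ν (C (β - θ))) :=
          min_le_min_right _ hβ
      _ ≤ ν (X - C β + C (β - θ)) := ν.map_add _ _
      _ = ν (X - C θ) := by rw [C_sub, add_sub, sub_add_cancel]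

theorem le_gaussValAt (hC : ∀ c, ν (C c) = v c) (hβ : (τ : WithTop Γ) ≤ ν (X - C β))
    {P : L[X]} (hP : ∀ θ ∈ P.roots, ν (X - C θ) ≤ τ) : ν P ≤ gaussValAt v τ β P :=
  AddValuation.le_of_forall_mem_roots _ _ (fun c => by rw [gaussValAt_C, hC]) fun θ hθ => by
    rw [gaussValAt_X_sub_C, ← hC]
    refine le_min ?_ (hP θ hθ)
    calc ν (X - C θ) = min (ν (X - C θ)) (ν (X - C β)) :=
          (min_eq_left ((hP θ hθ).trans hβ)).symm
      _ ≤ ν (X - C θ - (X - C β)) := ν.map_sub _ _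
      _ = ν (C (β - θ)) := by rw [C_sub, sub_sub_sub_cancel_left]

theorem isGaussLead_taylor_zero (hC : ∀ c, ν (C c) = v c) (hβ : (τ : WithTop Γ) ≤ ν (X - C β))
    {P : L[X]} (hP : ∀ θ ∈ P.roots, ν (X - C θ) < τ) : IsGaussLead v τ (taylor β P) 0 := by
  rw [isGaussLead_zero_iff, taylor_coeff_zero]
  refine le_antisymm ?_ (by simpa using gaussFun_le v τ (taylor β P) 0)
  refine AddValuation.le_of_forall_mem_roots (v.comap (evalRingHom β)) (gaussValAt v τ β)
    (fun c => by rw [gaussValAt_C]; exact (congrArg v (eval_C (x := β))).le) fun θ hθ => ?_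
  -- `v (β - θ) = ν (X - C θ) < τ`: the linear factor attains its Gauss value at its constant term
  have hval : v (β - θ) = ν (X - C θ) := by
    rw [← hC, C_sub, ← sub_sub_sub_cancel_left (C θ) (C β) X,
      ν.map_sub_eq_of_lt_left ((hP θ hθ).trans_le hβ)]
  show v (eval β (X - C θ)) ≤ _
  rw [eval_sub, eval_X, eval_C, gaussValAt_X_sub_C]
  exact le_min le_rfl (hval ▸ (hP θ hθ).le)

/-- Centring the Gauss valuation at a root `β` of `G` gives `G` a positive leading index while the
coefficients keep leading index `0`, so no cancellation can occur in the `G`-expansion of `Φ`. -/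
theorem map_le_map_expansion_term (hC : ∀ c, ν (C c) = v c)
    (hβ : (τ : WithTop Γ) ≤ ν (X - C β)) {Φ G : L[X]} (hG : G ≠ 0) (hGβ : G.IsRoot β)
    (hΦ : ∀ θ ∈ Φ.roots, ν (X - C θ) ≤ τ) {S : Finset ℕ} {c : ℕ → L[X]}
    (hc : ∀ k ∈ S, ∀ θ ∈ (c k).roots, ν (X - C θ) < τ) (hexp : Φ = ∑ k ∈ S, c k * G ^ k)
    {k : ℕ} (hk : k ∈ S) : ν Φ ≤ ν (c k * G ^ k) := by
  have hG' : taylor β G ≠ 0 := (taylor_injective β).ne_iff' (map_zero _) |>.mpr hG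
  obtain ⟨l, hl⟩ := exists_isGaussLead v τ (taylor β G)
  have hl0 : 0 < l := hl.pos_of_coeff_zero hG' (by rw [taylor_coeff_zero]; exact hGβ)
  have hlead : ∀ k ∈ S, taylor β (c k * G ^ k) ≠ 0 →
      IsGaussLead v τ (taylor β (c k * G ^ k)) (k * l) := fun k hk hne => by
    rw [taylor_mul, taylor_pow] at hne ⊢
    simpa using ((isGaussLead_taylor_zero hC hβ (hc k hk)).mul (hl.pow hG' k)
      (left_ne_zero_of_mul hne) (pow_ne_zero k hG')).2
  calc ν Φ ≤ gaussValAt v τ β Φ := le_gaussValAt hC hβ hΦ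
    _ = gaussVal v τ (∑ k ∈ S, taylor β (c k * G ^ k)) := by
        rw [gaussValAt_apply, hexp, map_sum]
    _ = S.inf fun k => gaussVal v τ (taylor β (c k * G ^ k)) :=
        gaussVal_sum S _ (· * l) (fun _ _ _ _ h => Nat.eq_of_mul_eq_mul_right hl0 h) hlead
    _ ≤ gaussValAt v τ β (c k * G ^ k) := Finset.inf_le hk
    _ ≤ ν (c k * G ^ k) := gaussValAt_le hC hβ _

end Comparison

section Expansion

variable {R : Type*} [CommRing R] [Nontrivial R] {g : R[X]}

theorem divByMonic_pow_succ (hg : g.Monic) (f : R[X]) (k : ℕ) :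
    f /ₘ g ^ (k + 1) = (f /ₘ g ^ k) /ₘ g := by
  set q := f /ₘ g ^ k
  refine (div_modByMonic_unique (q /ₘ g) (f %ₘ g ^ k + g ^ k * (q %ₘ g)) (hg.pow _)
    ⟨?_, ?_⟩).1
  · linear_combination modByMonic_add_div f (g ^ k) + g ^ k * modByMonic_add_div q g
  · have hgk : (g ^ k).degree ≠ ⊥ := degree_ne_bot.mpr (hg.pow k).ne_zero
    rw [pow_succ, hg.degree_mul]
    refine (degree_add_le _ _).trans_lt (max_lt ?_ ?_)
    · exact (degree_modByMonic_lt _ (hg.pow k)).trans_le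
        (le_add_of_nonneg_right (zero_le_degree_iff.mpr hg.ne_zero))
    · rw [mul_comm, (hg.pow k).degree_mul, add_comm]
      exact WithBot.add_lt_add_left hgk (degree_modByMonic_lt _ hg)

theorem sum_modByMonic_mul_pow_add (hg : g.Monic) (f : R[X]) (n : ℕ) :
    ∑ k ∈ Finset.range n, (f /ₘ g ^ k) %ₘ g * g ^ k + (f /ₘ g ^ n) * g ^ n = f := by
  induction n with
  | zero => simp
  | succ n ih =>
    rw [Finset.sum_range_succ, divByMonic_pow_succ hg]
    linear_combination ih + g ^ n * modByMonic_add_div (f /ₘ g ^ n) g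

theorem sum_modByMonic_mul_pow (hg : g.Monic) (hg0 : 0 < g.degree) (f : R[X]) :
    ∑ k ∈ Finset.range (f.natDegree + 1), (f /ₘ g ^ k) %ₘ g * g ^ k = f := by
  have hq : f /ₘ g ^ (f.natDegree + 1) = 0 := by
    refine (divByMonic_eq_zero_iff (hg.pow _)).mpr (degree_lt_degree ?_)
    rw [hg.natDegree_pow]
    have := natDegree_pos_iff_degree_pos.mpr hg0
    nlinarith
  simpa [hq] using sum_modByMonic_mul_pow_add hg f (f.natDegree + 1)

end Expansion

theorem truncVal_le (u : ValOn K[X] Γ) {g : K[X]} (hg : g.Monic) (hg0 : 0 < g.degree)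
    (f : K[X]) : truncVal u g f ≤ u.toFun f :=
  calc truncVal u g f
      ≤ u.toAddValuation (∑ k ∈ Finset.range (f.natDegree + 1), (f /ₘ g ^ k) %ₘ g * g ^ k) :=
        u.toAddValuation.map_le_sum fun k hk => Finset.inf_le hk
    _ = u.toFun f := by rw [sum_modByMonic_mul_pow hg hg0]; rfl

section AugVal

variable (u : ValOn K[X] Γ) {φ : K[X]} (γ : Γ)

theorem augVal_of_degree_lt (hφ : φ.Monic) {f : K[X]} (hf : f.degree < φ.degree) :
    augVal u.toFun φ γ f = u.toFun f := by
  have h0 : u.toFun ((f /ₘ φ ^ 0) %ₘ φ) + (0 : ℕ) • (γ : WithTop Γ) = u.toFun f := by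
    rw [pow_zero, divByMonic_one, (modByMonic_eq_self_iff hφ).mpr hf, zero_nsmul, add_zero]
  refine le_antisymm (h0 ▸ Finset.inf_le (Finset.mem_range.mpr (Nat.succ_pos _)))
    (Finset.le_inf fun k _ => ?_)
  rcases k with _ | k
  · exact h0.ge
  · have hdeg : φ.degree ≤ (φ ^ (k + 1)).degree :=
      degree_le_of_dvd (dvd_pow_self φ k.succ_ne_zero) (pow_ne_zero _ hφ.ne_zero)
    rw [(divByMonic_eq_zero_iff (hφ.pow _)).mpr (hf.trans_le hdeg), zero_modByMonic,
      u.map_zero', top_add]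
    exact le_top

theorem augVal_self (hφ : φ.Monic) (hφ0 : 0 < φ.degree) : augVal u.toFun φ γ φ = γ := by
  have hn := natDegree_pos_iff_degree_pos.mpr hφ0
  have h1 : u.toFun ((φ /ₘ φ ^ 1) %ₘ φ) + (1 : ℕ) • (γ : WithTop Γ) = γ := by
    rw [pow_one, show φ /ₘ φ = 1 by simpa using mul_divByMonic_cancel_left 1 hφ,
      (modByMonic_eq_self_iff hφ).mpr (degree_one.trans_lt hφ0), u.toFun_one, zero_add,
      one_nsmul]
  refine le_antisymm (h1 ▸ Finset.inf_le (Finset.mem_range.mpr (by omega)))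
    (Finset.le_inf fun k _ => ?_)
  rcases k with _ | _ | k
  · rw [pow_zero, divByMonic_one, modByMonic_self hφ, u.map_zero', top_add]
    exact le_top
  · exact h1.ge
  · have hdeg : φ.degree < (φ ^ (k + 2)).degree := degree_lt_degree (by
      rw [hφ.natDegree_pow]
      nlinarith)
    rw [(divByMonic_eq_zero_iff (hφ.pow _)).mpr hdeg, zero_modByMonic, u.map_zero', top_add]
    exact le_top

end AugVal

namespace IsLimitAug

open Filter

variable {w' w : ValOn K[X] Γ} {ι : Type*} [LinearOrder ι] {F : ContFamily w' ι} {φ : K[X]}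
  {γ : Γ}

theorem nonempty (haug : IsLimitAug F φ γ w) : Nonempty ι :=
  let ⟨i, _⟩ := haug.2.2 0
  ⟨i⟩

theorem val_self (haug : IsLimitAug F φ γ w) (hφ0 : 0 < φ.degree) : w.toFun φ = γ := by
  obtain ⟨i, hi⟩ := haug.2.2 φ
  rw [hi i le_rfl, augVal_self _ _ haug.1.1 hφ0]

theorem eventually_rho_eq (haug : IsLimitAug F φ γ w) {f : K[X]} (hf : f.degree < φ.degree) :
    ∀ᶠ i in atTop, (F.rho i).toFun f = w.toFun f := by
  obtain ⟨i₀, hi₀⟩ := haug.2.2 f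
  exact (eventually_ge_atTop i₀).mono fun i hi => by
    rw [hi₀ i hi, augVal_of_degree_lt _ _ haug.1.1 hf]

theorem truncVal_lt (haug : IsLimitAug F φ γ w) {g : K[X]} (hg : g.Monic) (hg0 : 0 < g.degree)
    (hgφ : g.degree < φ.degree) : truncVal w g φ < w.toFun φ := by
  have := haug.nonempty
  have hev : ∀ᶠ i in atTop, ∀ k ∈ Finset.range (φ.natDegree + 1),
      (F.rho i).toFun ((φ /ₘ g ^ k) %ₘ g * g ^ k) = w.toFun ((φ /ₘ g ^ k) %ₘ g * g ^ k) := by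
    refine (eventually_all_finset _).2 fun k _ => ?_
    filter_upwards [haug.eventually_rho_eq ((degree_modByMonic_lt _ hg).trans hgφ),
      haug.eventually_rho_eq hgφ] with i hc hgi
    simp only [← ValOn.toAddValuation_apply, AddValuation.map_mul, AddValuation.map_pow]
      at hc hgi ⊢
    rw [hc, hgi]
  obtain ⟨i, hi⟩ := hev.exists
  calc truncVal w g φ = truncVal (F.rho i) g φ := Finset.inf_congr rfl fun k hk => (hi k hk).symm
    _ ≤ (F.rho i).toFun φ := truncVal_le _ hg hg0 φ
    _ < γ := haug.2.1 i
    _ = w.toFun φ := (haug.val_self (hg0.trans hgφ)).symm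

end IsLimitAug

section Delta

variable {L : Type*} [Field L] [Algebra K L] (wbar : ValOn L[X] Γ) {f : K[X]} {t : WithTop Γ}

theorem delta_le_coe_iff : delta wbar f ≤ t ↔
    ∀ θ ∈ (f.map (algebraMap K L)).roots, wbar.toFun (X - C θ) ≤ t := by
  simp only [delta, Multiset.sup_le, Multiset.forall_mem_map_iff, WithBot.coe_le_coe]

theorem delta_lt_coe_iff : delta wbar f < t ↔
    ∀ θ ∈ (f.map (algebraMap K L)).roots, wbar.toFun (X - C θ) < t := by
  unfold delta
  induction (f.map (algebraMap K L)).roots using Multiset.induction_on with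
  | empty => simp
  | cons θ m ih => simp [ih]

theorem exists_delta_eq [IsAlgClosed L] (hf : 0 < f.degree) :
    ∃ θ : L, delta wbar f = (wbar.toFun (X - C θ) : WithBot (WithTop Γ)) := by
  classical
  have hne : (f.map (algebraMap K L)).roots.toFinset.Nonempty := by
    obtain ⟨z, hz⟩ := IsAlgClosed.exists_root (f.map (algebraMap K L)) (by
      rw [degree_map]
      exact hf.ne')
    exact ⟨z, Multiset.mem_toFinset.mpr
      ((mem_roots (map_ne_zero (ne_zero_of_degree_gt hf))).mpr hz)⟩
  obtain ⟨θ, hθ, hmax⟩ := Finset.exists_max_image _ (fun θ => wbar.toFun (X - C θ)) hne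
  refine ⟨θ, le_antisymm ((delta_le_coe_iff wbar).mpr fun θ' hθ' => hmax θ' ?_) ?_⟩
  · exact Multiset.mem_toFinset.mpr hθ'
  · exact Multiset.le_sup (Multiset.mem_map_of_mem _ (Multiset.mem_toFinset.mp hθ))

end Delta

section Abkp

variable {L : Type*} [Field L] [Algebra K L] [IsAlgClosed L] {vbar : ValOn L Γ}
  {w : ValOn K[X] Γ} {wbar : ValOn L[X] Γ}

theorem le_truncVal_of_root (hcomm : IsCommonExt wbar w vbar) {φ g : K[X]} (hg : g.Monic)
    (hg0 : 0 < g.degree) {β : L} (hβ : (g.map (algebraMap K L)).IsRoot β) {τ : Γ}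
    (hτβ : (τ : WithTop Γ) ≤ wbar.toFun (X - C β))
    (hφ : delta wbar φ ≤ ((τ : WithTop Γ) : WithBot (WithTop Γ)))
    (hsmall : ∀ h : K[X], h ≠ 0 → h.degree < g.degree →
      delta wbar h < ((τ : WithTop Γ) : WithBot (WithTop Γ))) :
    w.toFun φ ≤ truncVal w g φ := by
  refine Finset.le_inf fun k hk => ?_
  have hexp : φ.map (algebraMap K L) = ∑ k ∈ Finset.range (φ.natDegree + 1),
      ((φ /ₘ g ^ k) %ₘ g).map (algebraMap K L) * g.map (algebraMap K L) ^ k := by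
    conv_lhs => rw [← sum_modByMonic_mul_pow hg hg0 φ]
    simp only [Polynomial.map_sum, Polynomial.map_mul, Polynomial.map_pow]
  have hcoeff : ∀ k ∈ Finset.range (φ.natDegree + 1),
      ∀ θ ∈ (((φ /ₘ g ^ k) %ₘ g).map (algebraMap K L)).roots, wbar.toFun (X - C θ) < τ := by
    intro k _
    by_cases hc : (φ /ₘ g ^ k) %ₘ g = 0
    · simp [hc]
    · exact (delta_lt_coe_iff wbar).mp (hsmall _ hc (degree_modByMonic_lt _ hg))
  rw [← hcomm.1, ← hcomm.1, Polynomial.map_mul, Polynomial.map_pow]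
  exact map_le_map_expansion_term (ν := wbar.toAddValuation) (v := vbar.toAddValuation)
    hcomm.2 hτβ (hg.map _).ne_zero hβ ((delta_le_coe_iff wbar).mp hφ) hcoeff hexp hk

theorem delta_lt_of_truncVal_lt (hcomm : IsCommonExt wbar w vbar) {φ : K[X]}
    (hφ0 : 0 < φ.degree) (htrunc : ∀ g : K[X], g.Monic → 0 < g.degree → g.degree < φ.degree →
      truncVal w g φ < w.toFun φ)
    {f : K[X]} (hf : f ≠ 0) (hfφ : f.degree < φ.degree) : delta wbar f < delta wbar φ := by
  obtain ⟨θ, hθ⟩ := exists_delta_eq wbar hφ0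
  lift wbar.toFun (X - C θ) to Γ using wbar.ne_top' _ (X_sub_C_ne_zero θ) with τ
  rw [hθ]
  induction hn : f.natDegree using Nat.strong_induction_on generalizing f with
  | _ n ih =>
  rcases Nat.eq_zero_or_pos n with h0 | hpos
  · obtain ⟨a, rfl⟩ := natDegree_eq_zero.mp (hn.trans h0)
    simp [delta_lt_coe_iff]
  set g := f * C f.leadingCoeff⁻¹
  have hg : g.Monic := monic_mul_leadingCoeff_inv hf
  have hgf : g.degree = f.degree := degree_mul_leadingCoeff_inv f hf
  have hg0 : 0 < g.degree := hgf ▸ natDegree_pos_iff_degree_pos.mp (hn ▸ hpos)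
  have hroots : (g.map (algebraMap K L)).roots = (f.map (algebraMap K L)).roots := by
    rw [Polynomial.map_mul, map_C, mul_comm, roots_C_mul]
    simpa using hf
  by_contra hle
  obtain ⟨β, hβ, hτβ⟩ : ∃ β ∈ (g.map (algebraMap K L)).roots,
      (τ : WithTop Γ) ≤ wbar.toFun (X - C β) := by
    simp only [delta_lt_coe_iff, not_forall, not_lt, exists_prop] at hle
    rwa [hroots]
  refine (htrunc g hg hg0 (hgf ▸ hfφ)).not_ge (le_truncVal_of_root hcomm hg hg0
    (isRoot_of_mem_roots hβ) hτβ (hθ ▸ le_rfl) fun h hh hhg => ?_)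
  rw [hgf] at hhg
  exact ih _ (hn ▸ natDegree_lt_natDegree hh hhg) hh (hhg.trans hfφ) rfl

end Abkp

theorem abkp_of_limit_augmentation_general
    {K : Type*} [Field K] {Γ : Type*} [AddCommGroup Γ] [LinearOrder Γ] [IsOrderedAddMonoid Γ]
    {L : Type*} [Field L] [Algebra K L] [IsAlgClosure K L]
    (vbar : ValOn L Γ)
    (w : ValOn (Polynomial K) Γ)
    (wbar : ValOn (Polynomial L) Γ) (hcomm : IsCommonExt wbar w vbar)
    (w' : ValOn (Polynomial K) Γ)
    (ι : Type*) [LinearOrder ι] (F : ContFamily w' ι)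
    (hess : IsEssential F)
    (φ : Polynomial K) (γ : Γ) (haug : IsLimitAug F φ γ w) :
    IsABKP wbar φ ∧ ∀ i : ι, delta wbar (F.chi i) < delta wbar φ := by
  have : IsAlgClosed L := IsAlgClosure.isAlgClosed K
  obtain ⟨i⟩ := haug.nonempty
  have hχφ : ∀ i, (F.chi i).degree < φ.degree := fun i => hess.2 i φ haug.1.2.1
  have hφ0 : 0 < φ.degree := (zero_le_degree_iff.mpr (F.aug i).1.1.ne_zero).trans_lt (hχφ i)
  have key {f : K[X]} := delta_lt_of_truncVal_lt (f := f) hcomm hφ0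
    fun g hg hg0 hgφ => haug.truncVal_lt hg hg0 hgφ
  exact ⟨⟨haug.1.1, fun f hf hfφ => key hf hfφ⟩, fun i => key (F.aug i).1.1.ne_zero (hχφ i)⟩

/-- if `w = [W; φ, γ]` is a limit augmentation of an essential
continuous family `W = (ρ_i = [w'; χ_i, γ_i])_{i ∈ A}` of augmentations of `w'`,
then `φ` is an abstract key polynomial for `w` and `δ(χ_i) < δ(φ)` for all `i`. -/
theorem abkp_of_limit_augmentation
    {K : Type*} [Field K] {Γ : Type*} [AddCommGroup Γ] [LinearOrder Γ] [IsOrderedAddMonoid Γ]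
    {L : Type*} [Field L] [Algebra K L] [IsAlgClosure K L]
    (v : ValOn K Γ) (vbar : ValOn L Γ)
    (hvbar : ∀ c : K, vbar.toFun (algebraMap K L c) = v.toFun c)
    (w : ValOn (Polynomial K) Γ) (hext : Extends w v)
    (wbar : ValOn (Polynomial L) Γ) (hcomm : IsCommonExt wbar w vbar)
    (w' : ValOn (Polynomial K) Γ)
    (ι : Type*) [LinearOrder ι] (F : ContFamily w' ι)
    (hess : IsEssential F)
    (φ : Polynomial K) (γ : Γ) (haug : IsLimitAug F φ γ w) :
    IsABKP wbar φ ∧ ∀ i : ι, delta wbar (F.chi i) < delta wbar φ :=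
  abkp_of_limit_augmentation_general vbar w wbar hcomm w' ι F hess φ γ haug

end MLV
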